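/- Let h > 0, Δt ≥ 0, σ ∈ ℝ, N ≥ 1, and let I = [x_l, x_l + h] with midpoint x_c = x_l + h/2. Let u : [0,Δt] × I → ℝ^N be such that each component of u(τ,·) is integrable on I for every τ ∈ [0,Δt], and such that for each test function φ ∈ {1, x − x_c} and each component index 1 ≤ k ≤ N, the map τ ↦ ∫_I u_k(τ,x)·φ(x) dx is differentiable on [0,Δt] and satisfies d/dτ ∫_I u_k(τ,x)·φ(x) dx + σ·∫_I (u_k(τ,x) − ū_k(τ))·φ(x) dx = 0, where ū_k(τ) = (1/h)·∫_I u_k(τ,x) dx is the componentwise cell average. Then componentwise (i) ∫_I u(Δt,x) dx = ∫_I u(0,x) dx, and (ii) ∫_I u(Δt,x)·(x − x_c) dx = exp(−σ·Δt)·∫_I u(0,x)·(x − x_c) dx. -/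

import Mathlib

open MeasureTheory Set

lemma ode_decay {Δt σ : ℝ} (hΔt : 0 ≤ Δt) (M : ℝ → ℝ)
    (hM : ∀ τ ∈ Set.Icc (0:ℝ) Δt, HasDerivWithinAt M (-(σ * M τ)) (Set.Icc 0 Δt) τ) :
    M Δt = Real.exp (-(σ * Δt)) * M 0 := by
  set g : ℝ → ℝ := fun τ => Real.exp (σ * τ) * M τ with hg_def
  have hgteriv : ∀ τ ∈ Set.Icc (0:ℝ) Δt, HasDerivWithinAt g 0 (Set.Icc 0 Δt) τ := by
    intro τ hτ
    have h1 : HasDerivWithinAt (fun s => Real.exp (σ * s)) (σ * Real.exp (σ * τ))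
        (Set.Icc 0 Δt) τ := by
      have := ((Real.hasDerivAt_exp (σ * τ)).comp τ ((hasDerivAt_id τ).const_mul σ))
      simpa [mul_comm, Function.comp_def] using this.hasDerivWithinAt
    have h2 := h1.mul (hM τ hτ)
    have : HasDerivWithinAt g (σ * Real.exp (σ * τ) * M τ + Real.exp (σ * τ) * -(σ * M τ)) (Set.Icc 0 Δt) τ := h2
    convert this using 1
    ring
  have hcont : ContinuousOn g (Set.Icc 0 Δt) := fun τ hτ =>
    (hgteriv τ hτ).continuousWithinAt
  have hright : ∀ τ ∈ Set.Ico (0:ℝ) Δt, HasDerivWithinAt g 0 (Set.Ici τ) τ := by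
    intro τ hτ
    exact (hgteriv τ ⟨hτ.1, hτ.2.le⟩).mono_of_mem_nhdsWithin (Icc_mem_nhdsGE_of_mem ⟨hτ.1, hτ.2⟩)
  have hconst := constant_of_has_deriv_right_zero hcont hright Δt ⟨hΔt, le_rfl⟩
  have h0 : g 0 = M 0 := by simp [hg_def]
  have hmain : Real.exp (σ * Δt) * M Δt = M 0 := by rw [← h0]; exact hconst
  have hid : M Δt = Real.exp (-(σ * Δt)) * (Real.exp (σ * Δt) * M Δt) := by
    rw [← mul_assoc, ← Real.exp_add]; simp
  rw [hid, hmain]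

lemma split_int (a b c : ℝ) (hab : a ≤ b) (f φ : ℝ → ℝ)
    (hf : IntegrableOn f (Set.Icc a b)) (hφ : Continuous φ) :
    ∫ x in a..b, (f x - c) * φ x
      = (∫ x in a..b, f x * φ x) - c * ∫ x in a..b, φ x := by
  have hfφ : IntervalIntegrable (fun x => f x * φ x) volume a b := by
    apply IntegrableOn.intervalIntegrable
    rw [Set.uIcc_of_le hab]
    exact hf.mul_continuousOn hφ.continuousOn isCompact_Icc
  have hcφ : IntervalIntegrable (fun x => c * φ x) volume a b :=
    (continuous_const.mul hφ).intervalIntegrable a b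
  have he : ∀ x, (f x - c) * φ x = f x * φ x - c * φ x := fun x => by ring
  simp_rw [he]
  rw [intervalIntegral.integral_sub hfφ hcφ, intervalIntegral.integral_const_mul]

lemma int_lin (a h : ℝ) : (∫ x in a..(a+h), (x - (a + h/2))) = 0 := by
  rw [intervalIntegral.integral_sub intervalIntegral.intervalIntegrable_id
    intervalIntegrable_const]
  rw [integral_id, intervalIntegral.integral_const]
  simp [smul_eq_mul]
  ring

/-- **Exact solver of the OE damping procedure for 1D hyperbolic systems**
(Theorem 2.3 of the paper).  If every component of `u(τ,·)` is integrable on the cell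
`I = [x_l, x_l + h]` for each `τ ∈ [0, Δt]`, and for each linear test function
`φ ∈ {1, x - x_c}` (with `x_c = x_l + h/2` the midpoint) and each component index `k`
the componentwise moment `τ ↦ ∫_I u_k(τ,x) φ(x) dx` is differentiable on `[0, Δt]` and
satisfies the damping equation `d/dτ ∫_I u_k φ + σ ∫_I (u_k - ū_k) φ = 0` where
`ū_k(τ) = (1/h) ∫_I u_k(τ,x) dx`, then componentwise the zeroth-order moment is
preserved and the first-order moment is multiplied by `exp(-σ Δt)`. -/
theorem oe_damping_exact_solver_system
    (n : ℕ) (h Δt σ xl : ℝ) (hh : 0 < h) (hΔt : 0 ≤ Δt)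
    (u : ℝ → ℝ → Fin n → ℝ)
    (hint : ∀ τ ∈ Set.Icc (0:ℝ) Δt, ∀ k : Fin n,
      IntegrableOn (fun x => u τ x k) (Set.Icc xl (xl + h)))
    (hode : ∀ φ ∈ ({fun _ => (1:ℝ), fun x => x - (xl + h / 2)} : Set (ℝ → ℝ)),
      ∀ k : Fin n, ∀ τ ∈ Set.Icc (0:ℝ) Δt,
        HasDerivWithinAt (fun s => ∫ x in xl..(xl + h), u s x k * φ x)
          (-(σ * ∫ x in xl..(xl + h),
              (u τ x k - (1 / h) * ∫ y in xl..(xl + h), u τ y k) * φ x))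
          (Set.Icc (0:ℝ) Δt) τ) :
    ∀ k : Fin n,
      (∫ x in xl..(xl + h), u Δt x k) = (∫ x in xl..(xl + h), u 0 x k) ∧
      (∫ x in xl..(xl + h), u Δt x k * (x - (xl + h / 2))) =
        Real.exp (-(σ * Δt)) * ∫ x in xl..(xl + h), u 0 x k * (x - (xl + h / 2)) := by
  intro k
  have hab : xl ≤ xl + h := by linarith
  have hone : (fun _ => (1:ℝ)) ∈ ({fun _ => (1:ℝ), fun x => x - (xl + h / 2)} : Set (ℝ → ℝ)) :=
    Set.mem_insert _ _
  have hlin : (fun x => x - (xl + h / 2)) ∈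
      ({fun _ => (1:ℝ), fun x => x - (xl + h / 2)} : Set (ℝ → ℝ)) :=
    Set.mem_insert_of_mem _ rfl
  constructor
  · -- zeroth moment
    set M0 : ℝ → ℝ := fun τ => ∫ x in xl..(xl + h), u τ x k with hM0
    have key : ∀ τ ∈ Set.Icc (0:ℝ) Δt,
        HasDerivWithinAt M0 (-((0:ℝ) * M0 τ)) (Set.Icc 0 Δt) τ := by
      intro τ hτ
      have hd := hode (fun _ => (1:ℝ)) hone k τ hτ
      have hsplit : (∫ x in xl..(xl + h),
          (u τ x k - (1 / h) * ∫ y in xl..(xl + h), u τ y k) * (1:ℝ))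
          = M0 τ - ((1 / h) * M0 τ) * ∫ x in xl..(xl + h), (1:ℝ) := by
        simpa [hM0] using split_int xl (xl + h) ((1 / h) * ∫ y in xl..(xl + h), u τ y k)
          hab (fun x => u τ x k) (fun _ => (1:ℝ)) (hint τ hτ k) continuous_const
      have hint1 : (∫ x in xl..(xl + h), (1:ℝ)) = h := by simp
      have hzero : (∫ x in xl..(xl + h),
          (u τ x k - (1 / h) * ∫ y in xl..(xl + h), u τ y k) * (1:ℝ)) = 0 := by
        rw [hsplit, hint1]
        field_simp
        ring
      have hd' : HasDerivWithinAt M0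
          (-(σ * ∫ x in xl..(xl + h),
            (u τ x k - (1 / h) * ∫ y in xl..(xl + h), u τ y k) * (1:ℝ)))
          (Set.Icc 0 Δt) τ := by
        simpa [hM0] using hd
      rw [hzero] at hd'
      simpa using hd'
    have := ode_decay hΔt M0 key
    simpa [hM0] using this
  · -- first moment
    set M1 : ℝ → ℝ := fun τ => ∫ x in xl..(xl + h), u τ x k * (x - (xl + h / 2)) with hM1
    have key : ∀ τ ∈ Set.Icc (0:ℝ) Δt,
        HasDerivWithinAt M1 (-(σ * M1 τ)) (Set.Icc 0 Δt) τ := by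
      intro τ hτ
      have hd := hode (fun x => x - (xl + h / 2)) hlin k τ hτ
      have hsplit : (∫ x in xl..(xl + h),
          (u τ x k - (1 / h) * ∫ y in xl..(xl + h), u τ y k) * (x - (xl + h / 2)))
          = M1 τ - ((1 / h) * ∫ y in xl..(xl + h), u τ y k)
              * ∫ x in xl..(xl + h), (x - (xl + h / 2)) := by
        simpa [hM1] using split_int xl (xl + h) ((1 / h) * ∫ y in xl..(xl + h), u τ y k)
          hab (fun x => u τ x k) (fun x => x - (xl + h / 2)) (hint τ hτ k)
          (continuous_id.sub continuous_const)
      have hzero : (∫ x in xl..(xl + h), (x - (xl + h / 2))) = 0 := int_lin xl h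
      have hVal : (∫ x in xl..(xl + h),
          (u τ x k - (1 / h) * ∫ y in xl..(xl + h), u τ y k) * (x - (xl + h / 2)))
          = M1 τ := by
        rw [hsplit, hzero]; ring
      have hd' : HasDerivWithinAt M1
          (-(σ * ∫ x in xl..(xl + h),
            (u τ x k - (1 / h) * ∫ y in xl..(xl + h), u τ y k) * (x - (xl + h / 2))))
          (Set.Icc 0 Δt) τ := by simpa [hM1] using hd
      rw [hVal] at hd'
      exact hd'
    have := ode_decay hΔt M1 key
    simpa [hM1] using this
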